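/- arXiv:2101.02832 — 6 statements merged into one kernel-verified Lean document; each statement's English description precedes it below -/
import Mathlib

section
/- Let a, b be positive natural numbers. The set S = {a*n + b : n ∈ ℕ} is closed under multiplication (i.e., for all x, y ∈ S, x*y ∈ S) if and only if a divides b*(b-1). -/
theorem stmt0 (a b : ℕ) (ha : 0 < a) (hb : 0 < b) :
    (∀ x ∈ {x : ℕ | ∃ n : ℕ, 0 < n ∧ x = a * n + b},
      ∀ y ∈ {x : ℕ | ∃ n : ℕ, 0 < n ∧ x = a * n + b},
        x * y ∈ {x : ℕ | ∃ n : ℕ, 0 < n ∧ x = a * n + b}) ↔ a ∣ b * (b - 1) := by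
  obtain ⟨c, rfl⟩ : ∃ c, b = c + 1 := ⟨b - 1, by omega⟩
  simp only [Nat.add_sub_cancel]
  constructor
  · intro h
    obtain ⟨n, hn, heq⟩ := h (a * 1 + (c + 1)) ⟨1, one_pos, rfl⟩
      (a * 1 + (c + 1)) ⟨1, one_pos, rfl⟩
    have hge : n ≥ a + 2 * (c + 1) := by nlinarith
    obtain ⟨d, hd⟩ : ∃ d, n = a + 2 * (c + 1) + d := ⟨n - (a + 2*(c+1)), by omega⟩
    subst hd
    refine ⟨d, ?_⟩
    zify at heq ⊢
    linear_combination heq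
  · rintro ⟨k, hk⟩ x ⟨n, hn, rfl⟩ y ⟨m, hm, rfl⟩
    refine ⟨a * n * m + n * (c + 1) + m * (c + 1) + k, by positivity, ?_⟩
    zify at hk ⊢
    linear_combination hk
end

section
/- There is no rational number r > 1 such that every power r^k (k ∈ ℕ) can be written as (m² + n²)/(2mn) for some positive integers m, n. In other words, the set {(m² + n²)/(2mn) : m, n ∈ ℕ} does not contain the multiplicative semigroup {r^k : k ∈ ℕ} for any rational r ≠ 1. -/
/-- A rational whose square is an integer is an integer. -/
lemma int_of_sq_int (x : ℚ) (N : ℤ) (h : x ^ 2 = (N : ℚ)) :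
    ∃ e : ℤ, (e : ℚ) = x ∧ e ^ 2 = N := by
  have hden : (x ^ 2).den = 1 := by rw [h]; exact Rat.den_intCast N
  rw [Rat.den_pow] at hden
  have hx : x.den = 1 := by nlinarith [x.pos.le, x.pos]
  refine ⟨x.num, Rat.coe_int_num_of_den_eq_one hx, ?_⟩
  have : ((x.num : ℚ)) = x := Rat.coe_int_num_of_den_eq_one hx
  have h2 : ((x.num ^ 2 : ℤ) : ℚ) = (N : ℚ) := by push_cast [this]; exact h
  exact_mod_cast h2

theorem stmt3 :
    ¬ ∃ r : ℚ, 1 < r ∧ ∀ k : ℕ, 0 < k →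
      ∃ m n : ℕ, 0 < m ∧ 0 < n ∧
        r ^ k = ((m : ℚ) ^ 2 + (n : ℚ) ^ 2) / (2 * m * n) := by
  rintro ⟨r, hr, H⟩
  -- every even power r^(2k) is 1 + (rational square)
  have sq : ∀ k : ℕ, 0 < k → ∃ a : ℚ, r ^ (2 * k) = 1 + a ^ 2 := by
    intro k hk
    obtain ⟨m, n, hm, hn, h⟩ := H k hk
    have hm' : (m : ℚ) ≠ 0 := Nat.cast_ne_zero.mpr hm.ne'
    have hn' : (n : ℚ) ≠ 0 := Nat.cast_ne_zero.mpr hn.ne'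
    refine ⟨((m : ℚ) ^ 2 - (n : ℚ) ^ 2) / (2 * m * n), ?_⟩
    have h2 : r ^ (2 * k) = (r ^ k) ^ 2 := by rw [mul_comm, pow_mul]
    rw [h2, h]
    field_simp
    ring
  obtain ⟨a, ha⟩ := sq 2 (by norm_num)   -- r^4 = 1 + a^2
  obtain ⟨b, hb⟩ := sq 4 (by norm_num)   -- r^8 = 1 + b^2
  norm_num at ha hb
  have hr4 : 1 < r ^ 4 := one_lt_pow₀ hr (by norm_num)
  have ha0 : a ≠ 0 := by
    intro h0; rw [h0] at ha; simp at ha; rw [ha] at hr4; simp at hr4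
  -- r^4 + 1 is a rational square
  have hb2 : b ^ 2 = a ^ 2 * (1 + r ^ 4) := by nlinarith [ha, hb]
  have hc : (b / a) ^ 2 = 1 + r ^ 4 := by
    field_simp
    linarith [hb2]
  -- clear denominators
  have hq0 : (r.den : ℚ) ≠ 0 := Nat.cast_ne_zero.mpr r.den_nz
  have hpq : (r.num : ℚ) = r * (r.den : ℚ) := by
    exact (div_eq_iff hq0).mp (Rat.num_div_den r)
  have hd : (b / a * (r.den : ℚ) ^ 2) ^ 2 = (((r.den : ℤ) ^ 4 + r.num ^ 4 : ℤ) : ℚ) := by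
    push_cast
    rw [hpq]
    nlinarith [hc]
  obtain ⟨e, -, he⟩ := int_of_sq_int _ _ hd
  have hp0 : r.num ≠ 0 := by
    have : 0 < r.num := Rat.num_pos.mpr (lt_trans one_pos hr)
    exact this.ne'
  have hq0' : (r.den : ℤ) ≠ 0 := Int.natCast_ne_zero.mpr r.den_nz
  exact not_fermat_42 hq0' hp0 he.symm
end

section
/- Let p be a prime, b, d ∈ ℤ with b ≠ d, p ∤ b·d, and let u ∈ ℕ be such that p^u does not divide b - d. Define a coloring χ of the positive integers by χ(n) = (n / p^{v_p(n)}) mod p^u, where v_p(n) is the p-adic valuation of n. Then there do not exist positive integers x, y and n with χ(x) = χ(y) and x·(p·n + d) = y·(p·n + b). -/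
/-- The coloring `χ(m) = (m / p^{v_p(m)}) mod p^u`. -/
def chiColor (p u m : ℕ) : ℕ := (m / p ^ (m.factorization p)) % p ^ u

theorem stmt7 (p : ℕ) (hp : p.Prime) (b d : ℤ) (hbd : b ≠ d)
    (hpbd : ¬ (p : ℤ) ∣ b * d) (u : ℕ) (hu : ¬ (p : ℤ) ^ u ∣ b - d) :
    ¬ ∃ x y n : ℕ, 0 < x ∧ 0 < y ∧ 0 < n ∧ chiColor p u x = chiColor p u y ∧
      (x : ℤ) * ((p : ℤ) * n + d) = (y : ℤ) * ((p : ℤ) * n + b) := by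
  rintro ⟨x, y, n, hx, hy, hn, hchi, heq⟩
  have hpZ : Prime (p : ℤ) := Nat.prime_iff_prime_int.mp hp
  have hpb : ¬ (p : ℤ) ∣ b := fun h => hpbd (h.mul_right d)
  have hpd : ¬ (p : ℤ) ∣ d := fun h => hpbd (h.mul_left b)
  set a := x.factorization p with ha
  set c := y.factorization p with hc
  set x0 := x / p ^ a with hx0def
  set y0 := y / p ^ c with hy0def
  have hxeq : p ^ a * x0 = x := Nat.ordProj_mul_ordCompl_eq_self x p
  have hyeq : p ^ c * y0 = y := Nat.ordProj_mul_ordCompl_eq_self y p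
  have hpx0 : ¬ p ∣ x0 := Nat.not_dvd_ordCompl hp hx.ne'
  have hpy0 : ¬ p ∣ y0 := Nat.not_dvd_ordCompl hp hy.ne'
  have hpnd : ¬ (p : ℤ) ∣ ((p : ℤ) * n + d) := by
    intro h; exact hpd ((dvd_add_right (dvd_mul_right (p : ℤ) n)).mp h)
  have hpnb : ¬ (p : ℤ) ∣ ((p : ℤ) * n + b) := by
    intro h; exact hpb ((dvd_add_right (dvd_mul_right (p : ℤ) n)).mp h)
  have heq' : (p : ℤ) ^ a * x0 * ((p : ℤ) * n + d)
      = (p : ℤ) ^ c * y0 * ((p : ℤ) * n + b) := by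
    rw [← hxeq, ← hyeq] at heq
    push_cast at heq ⊢
    linarith
  have key : ∀ (a c m k : ℕ) (e f : ℤ), ¬ p ∣ m → ¬ (p : ℤ) ∣ e → a < c →
      (p : ℤ) ^ a * m * e ≠ (p : ℤ) ^ c * k * f := by
    intro a c m k e f hm he hlt h
    have h1 : (p : ℤ) ^ a * ((p : ℤ) * 1) ∣ (p : ℤ) ^ a * ((m : ℤ) * e) := by
      have h2 : (p : ℤ) ^ (a + 1) ∣ (p : ℤ) ^ c * k * f :=
        dvd_mul_of_dvd_left (dvd_mul_of_dvd_left (pow_dvd_pow _ hlt) _) _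
      rw [← h] at h2
      calc (p : ℤ) ^ a * ((p : ℤ) * 1) = (p : ℤ) ^ (a + 1) := by ring
        _ ∣ (p : ℤ) ^ a * m * e := h2
        _ = (p : ℤ) ^ a * ((m : ℤ) * e) := by ring
    have h3 : (p : ℤ) ∣ (m : ℤ) * e := by
      have := (mul_dvd_mul_iff_left (pow_ne_zero a (by exact_mod_cast hp.ne_zero : (p:ℤ) ≠ 0))).mp h1
      simpa using this
    rcases hpZ.dvd_mul.mp h3 with h4 | h4
    · exact hm (by exact_mod_cast h4)
    · exact he h4
  have hac : a = c := by
    rcases lt_trichotomy a c with h | h | h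
    · exact absurd heq' (key a c x0 y0 _ _ hpx0 hpnd h)
    · exact h
    · exact absurd heq'.symm (key c a y0 x0 _ _ hpy0 hpnb h)
  rw [← hac] at heq'
  have heq'' : (x0 : ℤ) * ((p : ℤ) * n + d) = (y0 : ℤ) * ((p : ℤ) * n + b) := by
    have hpa : (p : ℤ) ^ a ≠ 0 := pow_ne_zero a (by exact_mod_cast hp.ne_zero)
    apply mul_left_cancel₀ hpa
    calc (p:ℤ)^a * ((x0:ℤ) * ((p:ℤ)*n + d)) = (p:ℤ)^a * x0 * ((p:ℤ)*n + d) := by ring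
      _ = (p:ℤ)^a * y0 * ((p:ℤ)*n + b) := heq'
      _ = (p:ℤ)^a * ((y0:ℤ) * ((p:ℤ)*n + b)) := by ring
  have hchi' : x0 % p ^ u = y0 % p ^ u := hchi
  have hmod : (x0 : ℤ) ≡ (y0 : ℤ) [ZMOD ((p ^ u : ℕ) : ℤ)] :=
    Int.natCast_modEq_iff.mpr hchi'
  have hmod2 : (x0 : ℤ) * ((p : ℤ) * n + d) ≡ (x0 : ℤ) * ((p : ℤ) * n + b)
      [ZMOD ((p ^ u : ℕ) : ℤ)] := by
    calc (x0 : ℤ) * ((p : ℤ) * n + d) = (y0 : ℤ) * ((p : ℤ) * n + b) := heq''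
      _ ≡ (x0 : ℤ) * ((p : ℤ) * n + b) [ZMOD ((p ^ u : ℕ) : ℤ)] :=
        hmod.symm.mul_right _
  have hdvd : ((p ^ u : ℕ) : ℤ) ∣ (x0 : ℤ) * (b - d) := by
    have := hmod2.dvd
    have heq3 : (x0 : ℤ) * ((p : ℤ) * n + b) - (x0 : ℤ) * ((p : ℤ) * n + d)
        = (x0 : ℤ) * (b - d) := by ring
    rwa [heq3] at this
  have hcop : IsCoprime ((p ^ u : ℕ) : ℤ) (x0 : ℤ) := by
    rw [Int.isCoprime_iff_gcd_eq_one]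
    have : Nat.Coprime (p ^ u) x0 :=
      Nat.Coprime.pow_left u (hp.coprime_iff_not_dvd.mpr hpx0)
    rw [Int.gcd_natCast_natCast]; exact this
  have hfinal : ((p ^ u : ℕ) : ℤ) ∣ (b - d) := hcop.dvd_of_dvd_mul_left hdvd
  apply hu
  have : ((p ^ u : ℕ) : ℤ) = (p : ℤ) ^ u := by push_cast; ring
  rwa [this] at hfinal
end

section
/- Define a coloring c : ℕ → {0, 1} by writing each positive integer m as m = 3^k·q with 3 ∤ q, and setting c(m) = 0 if q ≡ 1 (mod 3) and c(m) = 1 if q ≡ 2 (mod 3). Then: (a) for all x, y, z ∈ ℕ, c(x) = c(y) implies c(x·z) = c(y·z); (b) there are no three consecutive positive integers n, n+1, n+2 all of the same color; consequently (c) there is no positive integer x divisible by some n ∈ ℕ such that x, x·(n+1)/n, x·(n+2)/n are all the same color. -/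
/-!
Writing `ordCompl[3] m` for the part of `m` prime to `3`, the colour records whether
`ordCompl[3] m ≡ 1` or `≡ 2 (mod 3)`. Since `ordCompl[3]` is multiplicative and the units of
`ZMod 3` form a group of order two, colours add modulo `2` under multiplication, so multiplying by
a common nonzero factor neither creates nor destroys equality of colours. This gives (a), and it
reduces (c), after cancelling the factor `x / n`, to (b). For (b), two of `n, n + 1, n + 2` are
prime to `3` and congruent to `1` and `2` respectively, so they have different colours.
-/

/-- The 3-Rado coloring: write `m = 3^k * q` with `3 ∤ q`; color `0` if `q ≡ 1 [MOD 3]`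
and `1` if `q ≡ 2 [MOD 3]`. -/
def radoColor (m : ℕ) : ℕ := if (m / 3 ^ (m.factorization 3)) % 3 = 1 then 0 else 1

lemma ordCompl_three_mod_three {m : ℕ} (hm : m ≠ 0) :
    ordCompl[3] m % 3 = 1 ∨ ordCompl[3] m % 3 = 2 := by
  have := Nat.not_dvd_ordCompl Nat.prime_three hm
  omega

lemma radoColor_le_one (m : ℕ) : radoColor m ≤ 1 := by
  unfold radoColor
  split_ifs <;> omega

lemma radoColor_mul {a b : ℕ} (ha : a ≠ 0) (hb : b ≠ 0) :
    radoColor (a * b) = (radoColor a + radoColor b) % 2 := by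
  unfold radoColor
  rw [Nat.ordCompl_mul, Nat.mul_mod]
  rcases ordCompl_three_mod_three ha with h | h <;>
    rcases ordCompl_three_mod_three hb with h' | h' <;> simp [h, h']

lemma radoColor_mul_left_eq_iff {x y z : ℕ} (hx : x ≠ 0) (hy : y ≠ 0) (hz : z ≠ 0) :
    radoColor (z * x) = radoColor (z * y) ↔ radoColor x = radoColor y := by
  rw [radoColor_mul hz hx, radoColor_mul hz hy]
  have := radoColor_le_one x
  have := radoColor_le_one y
  omega

lemma radoColor_of_not_dvd {m : ℕ} (hm : ¬ 3 ∣ m) :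
    radoColor m = if m % 3 = 1 then 0 else 1 := by
  rw [radoColor, Nat.factorization_eq_zero_of_not_dvd hm, pow_zero, Nat.div_one]

lemma radoColor_of_mod_three_eq_one {m : ℕ} (hm : m % 3 = 1) : radoColor m = 0 := by
  rw [radoColor_of_not_dvd (by omega), if_pos hm]

lemma radoColor_of_mod_three_eq_two {m : ℕ} (hm : m % 3 = 2) : radoColor m = 1 := by
  rw [radoColor_of_not_dvd (by omega), if_neg (by omega)]

theorem not_radoColor_consecutive_monochromatic (n : ℕ) :
    ¬ (radoColor n = radoColor (n + 1) ∧ radoColor (n + 1) = radoColor (n + 2)) := by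
  rintro ⟨h₁, h₂⟩
  rcases (by omega : n % 3 = 0 ∨ n % 3 = 1 ∨ n % 3 = 2) with h | h | h
  · rw [radoColor_of_mod_three_eq_one (by omega), radoColor_of_mod_three_eq_two (by omega)] at h₂
    omega
  · rw [radoColor_of_mod_three_eq_one h, radoColor_of_mod_three_eq_two (by omega)] at h₁
    omega
  · have h₃ := h₁.trans h₂
    rw [radoColor_of_mod_three_eq_two h, radoColor_of_mod_three_eq_one (by omega)] at h₃
    omega

theorem not_radoColor_scaled_monochromatic {x n : ℕ} (hx : 0 < x) (hn : 0 < n) (hnx : n ∣ x) :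
    ¬ (radoColor x = radoColor (x * (n + 1) / n) ∧ radoColor x = radoColor (x * (n + 2) / n)) := by
  obtain ⟨k, rfl⟩ := hnx
  have hk : k ≠ 0 := by rintro rfl; simp at hx
  have hdiv (m : ℕ) : n * k * m / n = k * m := by rw [mul_assoc, Nat.mul_div_cancel_left _ hn]
  rw [hdiv, hdiv, mul_comm n k, radoColor_mul_left_eq_iff hn.ne' (by omega) hk,
    radoColor_mul_left_eq_iff hn.ne' (by omega) hk]
  rintro ⟨h₁, h₂⟩
  exact not_radoColor_consecutive_monochromatic n ⟨h₁, h₁.symm.trans h₂⟩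

theorem stmt9 :
    (∀ x y z : ℕ, 0 < x → 0 < y → 0 < z →
        radoColor x = radoColor y → radoColor (x * z) = radoColor (y * z)) ∧
    (∀ n : ℕ, 0 < n →
        ¬ (radoColor n = radoColor (n + 1) ∧ radoColor (n + 1) = radoColor (n + 2))) ∧
    (∀ x n : ℕ, 0 < x → 0 < n → n ∣ x →
        ¬ (radoColor x = radoColor (x * (n + 1) / n) ∧
            radoColor x = radoColor (x * (n + 2) / n))) := by
  refine ⟨fun x y z hx hy hz h => ?_, fun n _ => not_radoColor_consecutive_monochromatic n,
    fun x n hx hn hnx => not_radoColor_scaled_monochromatic hx hn hnx⟩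
  rw [mul_comm x, mul_comm y]
  exact (radoColor_mul_left_eq_iff hx.ne' hy.ne' hz.ne').mpr h
end

section
/- Let E be a nonempty set of positive integers and c > 1 a real number. Then limsup_{N → ∞} |E ∩ [1, N]| / |E ∩ [1, c·N]| > 0. In other words, it is not the case that |E ∩ [1, N]| / |E ∩ [1, c·N]| tends to 0. -/
/-!
If `f N ≤ δ f ⌊cN⌋` failed for all large `N` with `δ = 1/(2c)`, then iterating `N ↦ ⌊cN⌋` from a point
where `f` is positive would multiply `f` by more than `2c` at each step, while the argument grows by at
most the factor `c`. After `k` steps `f` is at least `(2c)^k` at a point below `c^k ⌊cN₀⌋`, which contradicts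
the bound `f N ≤ N` of a counting function once `2^k > ⌊cN₀⌋`.
-/

open Filter

lemma le_pow_mul_of_le_mul_succ {x : ℕ → ℝ} {r : ℝ} (hr : 0 ≤ r) (h : ∀ k, x k ≤ r * x (k + 1))
    (k : ℕ) : x 0 ≤ r ^ k * x k := by
  induction k with
  | zero => simp
  | succ k ih =>
    calc x 0 ≤ r ^ k * x k := ih
      _ ≤ r ^ k * (r * x (k + 1)) := by gcongr; exact h k
      _ = r ^ (k + 1) * x (k + 1) := by ring

section FloorMul

variable {c : ℝ}

lemma le_floor_mul_self (hc : 1 ≤ c) (n : ℕ) : n ≤ ⌊c * n⌋₊ :=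
  Nat.le_floor (le_mul_of_one_le_left n.cast_nonneg hc)

lemma le_iterate_floor_mul (hc : 1 ≤ c) (k n : ℕ) : n ≤ (fun m : ℕ => ⌊c * m⌋₊)^[k] n :=
  Function.id_le_iterate_of_id_le (le_floor_mul_self hc) k n

lemma iterate_floor_mul_le (hc : 0 ≤ c) (k n : ℕ) :
    ((fun m : ℕ => ⌊c * m⌋₊)^[k] n : ℝ) ≤ c ^ k * n := by
  induction k with
  | zero => simp
  | succ k ih =>
    rw [Function.iterate_succ_apply']
    calc (⌊c * ((fun m : ℕ => ⌊c * m⌋₊)^[k] n)⌋₊ : ℝ)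
        ≤ c * ((fun m : ℕ => ⌊c * m⌋₊)^[k] n) := Nat.floor_le (by positivity)
      _ ≤ c * (c ^ k * n) := by gcongr
      _ = c ^ (k + 1) * n := by ring

theorem frequently_inv_two_mul_apply_floor_mul_le {f : ℕ → ℕ} (hf : ∀ n, f n ≤ n) (hc : 1 ≤ c) :
    ∃ᶠ N : ℕ in atTop, (2 * c)⁻¹ * f ⌊c * N⌋₊ ≤ f N := by
  have hc₀ : 0 < c := one_pos.trans_le hc
  rw [frequently_atTop]
  intro N₀
  by_contra! hlt
  set step : ℕ → ℕ := fun m => ⌊c * m⌋₊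
  set n := step N₀
  set g : ℕ → ℕ := fun k => step^[k] n
  have hg_ge : ∀ k, N₀ ≤ g k := fun k =>
    (le_floor_mul_self hc N₀).trans (le_iterate_floor_mul hc k n)
  have hfn : 1 ≤ f n := Nat.one_le_iff_ne_zero.2 fun h0 => by
    have h : (f N₀ : ℝ) < (2 * c)⁻¹ * f n := hlt N₀ le_rfl
    rw [h0, Nat.cast_zero, mul_zero] at h
    exact (Nat.cast_nonneg _).not_gt h
  have hiter (k : ℕ) : (f (g 0) : ℝ) ≤ (2 * c)⁻¹ ^ k * f (g k) := by
    refine le_pow_mul_of_le_mul_succ (x := fun k => (f (g k) : ℝ)) (by positivity) (fun k => ?_) k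
    simpa only [g, Function.iterate_succ_apply'] using (hlt (g k) (hg_ge k)).le
  obtain ⟨k, hk⟩ : ∃ k, n < 2 ^ k := ⟨n, Nat.lt_two_pow_self⟩
  have hle : (1 : ℝ) ≤ n / 2 ^ k :=
    calc (1 : ℝ) ≤ f (g 0) := by exact_mod_cast hfn
      _ ≤ (2 * c)⁻¹ ^ k * f (g k) := hiter k
      _ ≤ (2 * c)⁻¹ ^ k * (c ^ k * n) := by
          gcongr
          exact (Nat.cast_le.2 (hf _)).trans (iterate_floor_mul_le hc₀.le k n)
      _ = n / 2 ^ k := by rw [inv_pow, mul_pow]; field_simp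
  rw [le_div_iff₀ (by positivity), one_mul] at hle
  exact absurd hle (not_le.2 (by exact_mod_cast hk))

end FloorMul

open Classical in
theorem stmt10_general (E : Set ℕ) (c : ℝ) (hc : 1 < c) :
    ∃ δ : ℝ, 0 < δ ∧ ∀ N₀ : ℕ, ∃ N : ℕ, N₀ ≤ N ∧
      (((Finset.Icc 1 N).filter (· ∈ E)).card : ℝ) ≥
        δ * (((Finset.Icc 1 (⌊c * N⌋₊)).filter (· ∈ E)).card : ℝ) := by
  have hcount (N : ℕ) : ((Finset.Icc 1 N).filter (· ∈ E)).card ≤ N :=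
    (Finset.card_filter_le _ _).trans (by simp)
  refine ⟨(2 * c)⁻¹, by positivity, fun N₀ => ?_⟩
  exact frequently_atTop.1 (frequently_inv_two_mul_apply_floor_mul_le hcount hc.le) N₀

open Classical in
theorem stmt10 (E : Set ℕ) (hE : E.Nonempty) (hEpos : ∀ m ∈ E, 0 < m)
    (c : ℝ) (hc : 1 < c) :
    ∃ δ : ℝ, 0 < δ ∧ ∀ N₀ : ℕ, ∃ N : ℕ, N₀ ≤ N ∧
      (((Finset.Icc 1 N).filter (· ∈ E)).card : ℝ) ≥
        δ * (((Finset.Icc 1 (⌊c * N⌋₊)).filter (· ∈ E)).card : ℝ) :=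
  stmt10_general E c hc
end

section
/- Let G be a countable semigroup, (T_g)_{g∈G} a measure preserving action of G on a probability space (X, μ), and A a measurable set with μ(A) > 0. Then for every ε > 0, the set R = {g ∈ G : μ(A ∩ T_g⁻¹A) > μ(A)² − ε} is syndetic, i.e., there is a finite set F ⊆ G with ⋃_{x∈F} R/x = G, where R/x = {g ∈ G : g·x ∈ R}. -/
/-!
If the set `R` of return times were not syndetic, every finite `F ⊆ G` would have a left translate
`g F` missing `R`. Iterating this gives `p₀, …, p_N` whose quotients `p_j = s p_i` (`i < j`) all lie
outside `R`, so the sets `T_{p_i}⁻¹ A` all have measure `μ A` while any two of them meet in measure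
at most `μ(A)² - ε`. The second-moment bound `(∑ μ Bᵢ)² ≤ ∑_{i,j} μ(Bᵢ ∩ Bⱼ)`, i.e. Cauchy–Schwarz
for `∑ 𝟙_{Bᵢ}`, then gives `(N + 1) μ(A)² ≤ μ A + N (μ(A)² - ε)`, impossible once `N ε > 1`.
-/

open MeasureTheory Finset

theorem exists_seq_mul_mem_of_forall_finset {G : Type*} [Semigroup G] {S : Set G}
    (hS : ∀ F : Finset G, ∃ g, ∀ x ∈ F, g * x ∈ S) (n : ℕ) :
    ∃ p : ℕ → G, ∀ i j, i < j → j ≤ n → ∃ s ∈ S, p j = s * p i := by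
  classical
  induction n with
  | zero => exact ⟨fun _ => (hS ∅).choose, fun i j hij hj => by omega⟩
  | succ n ih =>
    obtain ⟨p, hp⟩ := ih
    have hdiff : ∀ i, ∃ d, i < n → p n = d * p i := fun i =>
      if hi : i < n then (hp i n hi le_rfl).imp fun d hd _ => hd.2 else ⟨p n, fun h => absurd h hi⟩
    choose d hd using hdiff
    -- the new term is `g * p n * p n`: its quotients by `p n` and `p i` are `g * p n` and
    -- `g * (p n * d i)`, both in `S` by the choice of `g`
    obtain ⟨g, hg⟩ := hS (insert (p n) ((range n).image (p n * d ·)))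
    refine ⟨Function.update p (n + 1) (g * p n * p n), fun i j hij hj => ?_⟩
    rcases Nat.le_succ_iff.mp hj with hj | rfl
    · simpa [Function.update_of_ne (by omega : j ≠ n + 1),
        Function.update_of_ne (by omega : i ≠ n + 1)] using hp i j hij (by omega)
    rw [Function.update_self, Function.update_of_ne (by omega : i ≠ n + 1)]
    rcases Nat.lt_succ_iff_lt_or_eq.mp hij with hi | hi
    · exact ⟨g * (p n * d i), hg _ (mem_insert_of_mem (mem_image_of_mem _ (mem_range.2 hi))),
        by rw [hd i hi]; simp only [mul_assoc]⟩
    · exact ⟨g * p n, hg _ (mem_insert_self _ _), by rw [hi]⟩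

section SecondMoment

variable {X ι : Type*} [MeasurableSpace X] {μ : Measure X} {s : Finset ι} {B : ι → Set X}

theorem integral_sq_sum_indicator_one [IsFiniteMeasure μ] (hB : ∀ i ∈ s, MeasurableSet (B i)) :
    ∫ x, (∑ i ∈ s, (B i).indicator 1 x) ^ 2 ∂μ = ∑ i ∈ s, ∑ j ∈ s, μ.real (B i ∩ B j) := by
  have hint : ∀ i ∈ s, ∀ j ∈ s, Integrable ((B i ∩ B j).indicator (1 : X → ℝ)) μ :=
    fun i hi j hj => (integrable_const 1).indicator ((hB i hi).inter (hB j hj))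
  have hsq : ∀ x, (∑ i ∈ s, (B i).indicator (1 : X → ℝ) x) ^ 2 =
      ∑ i ∈ s, ∑ j ∈ s, (B i ∩ B j).indicator 1 x := fun x => by
    simp only [sq, sum_mul_sum, Set.inter_indicator_one, Pi.mul_apply]
  simp_rw [hsq]
  rw [integral_finsetSum _ fun i hi => integrable_finsetSum _ (hint i hi)]
  refine sum_congr rfl fun i hi => ?_
  rw [integral_finsetSum _ (hint i hi)]
  exact sum_congr rfl fun j hj => integral_indicator_one ((hB i hi).inter (hB j hj))

theorem sq_sum_measureReal_le_sum_sum_measureReal_inter [IsProbabilityMeasure μ]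
    (hB : ∀ i ∈ s, MeasurableSet (B i)) :
    (∑ i ∈ s, μ.real (B i)) ^ 2 ≤ ∑ i ∈ s, ∑ j ∈ s, μ.real (B i ∩ B j) := by
  set f : X → ℝ := fun x => ∑ i ∈ s, (B i).indicator 1 x
  have hf : MemLp f 2 μ :=
    memLp_finsetSum _ fun i hi => memLp_indicator_const 2 (hB i hi) 1 (Or.inr (measure_ne_top μ _))
  have hmean : ∫ x, f x ∂μ = ∑ i ∈ s, μ.real (B i) := by
    rw [integral_finsetSum _ fun i hi => (integrable_const 1).indicator (hB i hi)]
    exact sum_congr rfl fun i hi => integral_indicator_one (hB i hi)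
  have hvar := ProbabilityTheory.variance_nonneg f μ
  rw [ProbabilityTheory.variance_eq_sub hf] at hvar
  rw [← hmean, ← integral_sq_sum_indicator_one hB]
  simpa using hvar

theorem card_mul_sq_le_of_measureReal_inter_le [IsProbabilityMeasure μ]
    (hB : ∀ i ∈ s, MeasurableSet (B i)) (hs : s.Nonempty) {a c : ℝ}
    (ha : ∀ i ∈ s, μ.real (B i) = a) (hc : ∀ i ∈ s, ∀ j ∈ s, i ≠ j → μ.real (B i ∩ B j) ≤ c) :
    #s * a ^ 2 ≤ a + (#s - 1) * c := by
  classical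
  have hrow : ∀ i ∈ s, ∑ j ∈ s, μ.real (B i ∩ B j) ≤ a + (#s - 1) * c := by
    intro i hi
    rw [← add_sum_erase s _ hi, Set.inter_self, ha i hi]
    gcongr
    calc ∑ j ∈ s.erase i, μ.real (B i ∩ B j) ≤ ∑ j ∈ s.erase i, c :=
          sum_le_sum fun j hj => hc i hi j (mem_of_mem_erase hj) (ne_of_mem_erase hj).symm
      _ = (#s - 1) * c := by rw [sum_const, card_erase_of_mem hi, nsmul_eq_mul, Nat.cast_pred hs.card_pos]
  have hcard : (0 : ℝ) < #s := by exact_mod_cast hs.card_pos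
  have key : (#s * a) ^ 2 ≤ #s * (a + (#s - 1) * c) :=
    calc (#s * a) ^ 2 = (∑ i ∈ s, μ.real (B i)) ^ 2 := by rw [sum_congr rfl ha, sum_const, nsmul_eq_mul]
      _ ≤ ∑ i ∈ s, ∑ j ∈ s, μ.real (B i ∩ B j) := sq_sum_measureReal_le_sum_sum_measureReal_inter hB
      _ ≤ ∑ i ∈ s, (a + (#s - 1) * c) := sum_le_sum hrow
      _ = #s * (a + (#s - 1) * c) := by rw [sum_const, nsmul_eq_mul]
  nlinarith

end SecondMoment

theorem measureReal_preimage_inter_preimage_mul {G X : Type*} [Semigroup G] [MeasurableSpace X]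
    {μ : Measure X} {T : G → X → X} (hT : ∀ g, MeasurePreserving (T g) μ μ)
    (hact : ∀ g h : G, T (g * h) = T g ∘ T h) {A : Set X} (hA : MeasurableSet A) (s g : G) :
    μ.real (T g ⁻¹' A ∩ T (s * g) ⁻¹' A) = μ.real (A ∩ T s ⁻¹' A) := by
  rw [hact, Set.preimage_comp, ← Set.preimage_inter]
  exact (hT g).measureReal_preimage (hA.inter ((hT s).measurable hA)).nullMeasurableSet

theorem stmt14_general {G X : Type*} [Semigroup G] [MeasurableSpace X]
    (μ : Measure X) [IsProbabilityMeasure μ] (T : G → X → X)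
    (hT : ∀ g, MeasurePreserving (T g) μ μ)
    (hact : ∀ g h : G, T (g * h) = T g ∘ T h)
    (A : Set X) (hA : MeasurableSet A)
    (ε : ℝ) (hε : 0 < ε) :
    ∃ F : Finset G, ∀ g : G, ∃ x ∈ F,
      (μ (A ∩ T (g * x) ⁻¹' A)).toReal > (μ A).toReal ^ 2 - ε := by
  by_contra! hbad
  simp only [← measureReal_def] at hbad
  obtain ⟨N, hN⟩ := exists_nat_gt (1 / ε)
  obtain ⟨p, hp⟩ := exists_seq_mul_mem_of_forall_finset
    (S := {s | μ.real (A ∩ T s ⁻¹' A) ≤ μ.real A ^ 2 - ε}) hbad N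
  have hpair : ∀ i ∈ range (N + 1), ∀ j ∈ range (N + 1), i ≠ j →
      μ.real (T (p i) ⁻¹' A ∩ T (p j) ⁻¹' A) ≤ μ.real A ^ 2 - ε := by
    intro i hi j hj hij
    wlog hlt : i < j generalizing i j
    · rw [Set.inter_comm]
      exact this j hj i hi hij.symm (hij.lt_or_gt.resolve_left hlt)
    obtain ⟨s, hs, hpj⟩ := hp i j hlt (Nat.lt_succ_iff.mp (mem_range.mp hj))
    rwa [hpj, measureReal_preimage_inter_preimage_mul hT hact hA]
  have key := card_mul_sq_le_of_measureReal_inter_le (fun i _ => (hT (p i)).measurable hA)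
    nonempty_range_add_one (fun i _ => (hT (p i)).measureReal_preimage hA.nullMeasurableSet) hpair
  rw [card_range, Nat.cast_add_one, add_sub_cancel_right] at key
  have hNε : 1 < N * ε := by rwa [div_lt_iff₀ hε] at hN
  nlinarith [measureReal_le_one (μ := μ) (s := A)]

theorem stmt14 {G X : Type*} [Semigroup G] [Countable G] [MeasurableSpace X]
    (μ : Measure X) [IsProbabilityMeasure μ] (T : G → X → X)
    (hT : ∀ g, MeasurePreserving (T g) μ μ)
    (hact : ∀ g h : G, T (g * h) = T g ∘ T h)
    (A : Set X) (hA : MeasurableSet A) (hApos : 0 < μ A)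
    (ε : ℝ) (hε : 0 < ε) :
    ∃ F : Finset G, ∀ g : G, ∃ x ∈ F,
      (μ (A ∩ T (g * x) ⁻¹' A)).toReal > (μ A).toReal ^ 2 - ε :=
  stmt14_general μ T hT hact A hA ε hε
end
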